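/- Let M = ℤ^n with n ≥ 2, r > n − 2, a = e_1 + ... + e_{n−1} + r·e_n, and Q = Cone(e_1,...,e_{n−1}, a). Then the set S_Q ∩ M = { Σ_{i<n} α_i e_i + α_n a : 0 ≤ α_i < 1 } ∩ ℤ^n equals {0, a_1,...,a_{r−1}}, where a_i = e_1 + ... + e_{n−1} + i·e_n, and the constant Γ_Q equals n − 2 − (n−2)/r. -/

import Mathlib

/-!
The generators `e₁, …, e_{n-1}, a` form a basis of `ℝⁿ`, in which `x` has coordinates
`c_n = x_n / r` and `c_j = x_j - x_n / r`. Hence `W` is the sum of these coordinates, and a box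
point `u` has `0 ≤ u_n < r` and `u_j = ⌈u_n / r⌉` for `j < n`, which leaves `0` and the `aᵢ`.
A lattice point of `Q` with positive last coordinate is at least `1` in all other coordinates,
so `aᵢ` is not a sum of two nonzero lattice points of `Q` and `k_{aᵢ} = 1`; `k_0 = 0` since `Q`
is pointed. So `W - k` takes the values `0` and `(n - 2)(1 - i/r)`, maximal at `i = 1`.
-/

open Finset

noncomputable section

/-- Cast an integer vector to a real vector. -/
def castZ {n : ℕ} (u : Fin n → ℤ) : Fin n → ℝ := fun j => (u j : ℝ)

/-- Membership in the cone spanned by the vectors `w`. -/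
def inCone {n m : ℕ} (w : Fin m → (Fin n → ℝ)) (x : Fin n → ℝ) : Prop :=
  ∃ a : Fin m → ℝ, (∀ i, 0 ≤ a i) ∧ x = ∑ i, a i • w i

/-- The set of total weights of nonnegative representations of `x` in terms of `w`. -/
def weightSet {n m : ℕ} (w : Fin m → (Fin n → ℝ)) (x : Fin n → ℝ) : Set ℝ :=
  { t | ∃ a : Fin m → ℝ, (∀ i, 0 ≤ a i) ∧ x = ∑ i, a i • w i ∧ t = ∑ i, a i }

/-- The maximum weight function `W`. -/
def maxWeight {n m : ℕ} (w : Fin m → (Fin n → ℝ)) (x : Fin n → ℝ) : ℝ :=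
  sSup (weightSet w x)

/-- A lattice vector is primitive. -/
def Primitive {n : ℕ} (v : Fin n → ℤ) : Prop :=
  v ≠ 0 ∧ ∀ (z : ℤ) (q : Fin n → ℤ), 0 < z → v = z • q → z = 1

/-- Lattice points of the cone. -/
def latticeInCone {n m : ℕ} (w : Fin m → (Fin n → ℤ)) (u : Fin n → ℤ) : Prop :=
  inCone (fun i => castZ (w i)) (castZ u)

/-- `χ^u ∈ m_Q^k` : `u` is a sum of `k` nonzero lattice points of the cone plus a
lattice point of the cone. -/
def inPowM {n m : ℕ} (w : Fin m → (Fin n → ℤ)) (u : Fin n → ℤ) (k : ℕ) : Prop :=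
  ∃ v : Fin k → (Fin n → ℤ), (∀ i, latticeInCone w (v i) ∧ v i ≠ 0) ∧
    latticeInCone w (u - ∑ i, v i)

/-- `k_u` : the largest `k` such that `χ^u ∈ m_Q^k`. -/
def kU {n m : ℕ} (w : Fin m → (Fin n → ℤ)) (u : Fin n → ℤ) : ℕ :=
  sSup {k | inPowM w u k}

/-- Lattice points of the fundamental box `S_Q`. -/
def inBox {n m : ℕ} (w : Fin m → (Fin n → ℤ)) (u : Fin n → ℤ) : Prop :=
  ∃ a : Fin m → ℝ, (∀ i, 0 ≤ a i ∧ a i < 1) ∧ castZ u = ∑ i, a i • castZ (w i)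

/-- The constant `Γ_Q`. -/
def gammaQ {n m : ℕ} (w : Fin m → (Fin n → ℤ)) : ℝ :=
  sSup { x | ∃ u, inBox w u ∧
    x = maxWeight (fun i => castZ (w i)) (castZ u) - (kU w u : ℝ) }

end

/-- The ray generators of the cone `Q = Cone(e₁, ..., e_{n-1}, a)` from the sharpness
example, where `a = e₁ + ⋯ + e_{n−1} + r·eₙ`. -/
def exGens (n : ℕ) (r : ℕ) : Fin n → (Fin n → ℤ) :=
  fun i => if (i : ℕ) < n - 1 then Pi.single i 1
           else fun j => if (j : ℕ) = n - 1 then (r : ℤ) else 1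

/-- The lattice point `aᵢ = e₁ + ⋯ + e_{n−1} + i·eₙ`. -/
def exA (n : ℕ) (i : ℕ) : Fin n → ℤ := fun j => if (j : ℕ) = n - 1 then (i : ℤ) else 1

section LatticeCone

variable {n m : ℕ}

@[simp]
lemma castZ_zero : castZ (0 : Fin n → ℤ) = 0 := by
  funext j; simp [castZ]

@[simp]
lemma castZ_add (u v : Fin n → ℤ) : castZ (u + v) = castZ u + castZ v := by
  funext j; simp [castZ]

variable {w : Fin m → Fin n → ℤ} {u v : Fin n → ℤ}

lemma latticeInCone_zero : latticeInCone w 0 :=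
  ⟨0, fun _ => le_rfl, by simp⟩

lemma latticeInCone.add (hu : latticeInCone w u) (hv : latticeInCone w v) :
    latticeInCone w (u + v) := by
  obtain ⟨a, ha, hu⟩ := hu
  obtain ⟨b, hb, hv⟩ := hv
  exact ⟨a + b, fun i => add_nonneg (ha i) (hb i), by
    simp [hu, hv, add_smul, Finset.sum_add_distrib]⟩

lemma latticeInCone_sum {ι : Type*} (s : Finset ι) (f : ι → Fin n → ℤ)
    (hf : ∀ i ∈ s, latticeInCone w (f i)) : latticeInCone w (∑ i ∈ s, f i) :=
  Finset.sum_induction f _ (fun _ _ => latticeInCone.add) latticeInCone_zero hf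

lemma inPowM_zero_of_latticeInCone (hu : latticeInCone w u) : inPowM w u 0 :=
  ⟨Fin.elim0, fun i => i.elim0, by simpa using hu⟩

lemma inPowM_one_of_latticeInCone (hu : latticeInCone w u) (hu0 : u ≠ 0) : inPowM w u 1 :=
  ⟨fun _ => u, fun _ => ⟨hu, hu0⟩, by simpa using latticeInCone_zero⟩

lemma inPowM.mono {j k : ℕ} (h : inPowM w u k) (hjk : j ≤ k) : inPowM w u j := by
  obtain ⟨d, rfl⟩ := Nat.exists_eq_add_of_le hjk
  obtain ⟨v, hv, hrest⟩ := h
  refine ⟨fun i => v (Fin.castAdd d i), fun i => hv _, ?_⟩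
  have hsplit : u - ∑ i, v (Fin.castAdd d i) = (u - ∑ i, v i) + ∑ i, v (Fin.natAdd j i) := by
    rw [Fin.sum_univ_add]; abel
  rw [hsplit]
  exact hrest.add (latticeInCone_sum _ _ fun i _ => (hv _).1)

lemma kU_eq_of_inPowM {k : ℕ} (hk : inPowM w u k) (hk1 : ¬ inPowM w u (k + 1)) : kU w u = k :=
  IsGreatest.csSup_eq ⟨hk, fun _ hj => not_lt.mp fun hkj => hk1 (hj.mono hkj)⟩

end LatticeCone

section SimplicialCone

variable {n m : ℕ}

lemma weightSet_eq_singleton {w : Fin m → Fin n → ℝ} (hw : LinearIndependent ℝ w)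
    {x : Fin n → ℝ} {c : Fin m → ℝ} (hc : ∀ i, 0 ≤ c i) (hx : x = ∑ i, c i • w i) :
    weightSet w x = {∑ i, c i} := by
  ext t
  constructor
  · rintro ⟨a, -, hxa, rfl⟩
    rw [Set.mem_singleton_iff, funext (Fintype.linearIndependent_iffₛ.mp hw a c (hxa ▸ hx))]
  · rintro rfl
    exact ⟨c, hc, hx, rfl⟩

lemma maxWeight_eq_sum {w : Fin m → Fin n → ℝ} (hw : LinearIndependent ℝ w)
    {x : Fin n → ℝ} {c : Fin m → ℝ} (hc : ∀ i, 0 ≤ c i) (hx : x = ∑ i, c i • w i) :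
    maxWeight w x = ∑ i, c i := by
  rw [maxWeight, weightSet_eq_singleton hw hc hx, csSup_singleton]

lemma maxWeight_zero {w : Fin m → Fin n → ℝ} (hw : LinearIndependent ℝ w) : maxWeight w 0 = 0 := by
  simpa using maxWeight_eq_sum hw (c := 0) (fun _ => le_rfl) (by simp)

lemma inCone_iff_of_linearIndependent {w : Fin m → Fin n → ℝ} (hw : LinearIndependent ℝ w)
    {x : Fin n → ℝ} {c : Fin m → ℝ} (hx : x = ∑ i, c i • w i) :
    inCone w x ↔ ∀ i, 0 ≤ c i := by
  refine ⟨?_, fun hc => ⟨c, hc, hx⟩⟩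
  rintro ⟨a, ha, hxa⟩
  rwa [← funext (Fintype.linearIndependent_iffₛ.mp hw a c (hxa ▸ hx))]

lemma inBox_iff_of_linearIndependent {w : Fin m → Fin n → ℤ}
    (hw : LinearIndependent ℝ fun i => castZ (w i)) {u : Fin n → ℤ} {c : Fin m → ℝ}
    (hu : castZ u = ∑ i, c i • castZ (w i)) :
    inBox w u ↔ ∀ i, 0 ≤ c i ∧ c i < 1 := by
  refine ⟨?_, fun hc => ⟨c, hc, hu⟩⟩
  rintro ⟨a, ha, hua⟩
  rwa [← funext (Fintype.linearIndependent_iffₛ.mp hw a c (hua ▸ hu))]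

end SimplicialCone

section Example

variable {m r : ℕ}

lemma exGens_apply (i j : Fin (m + 2)) :
    exGens (m + 2) r i j =
      if i = Fin.last (m + 1) then (if j = Fin.last (m + 1) then (r : ℤ) else 1)
      else if j = i then 1 else 0 := by
  simp only [exGens, show m + 2 - 1 = m + 1 from rfl, Fin.ext_iff, Fin.val_last]
  by_cases hi : (i : ℕ) = m + 1
  · simp [hi]
  · simp [hi, show (i : ℕ) < m + 1 by omega, Pi.single_apply, Fin.ext_iff]

lemma exA_apply (i : ℕ) (j : Fin (m + 2)) :
    exA (m + 2) i j = if j = Fin.last (m + 1) then (i : ℤ) else 1 := by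
  simp only [exA, show m + 2 - 1 = m + 1 from rfl, Fin.ext_iff, Fin.val_last]

lemma sum_smul_exGens_apply (a : Fin (m + 2) → ℝ) (j : Fin (m + 2)) :
    (∑ i, a i • castZ (exGens (m + 2) r i)) j =
      if j = Fin.last (m + 1) then r * a (Fin.last (m + 1)) else a j + a (Fin.last (m + 1)) := by
  simp only [Finset.sum_apply, Pi.smul_apply, castZ, exGens_apply, smul_eq_mul]
  rw [Fintype.sum_eq_add_sum_compl (Fin.last (m + 1)), if_pos rfl]
  have hrest : ∀ i ∈ ({Fin.last (m + 1)}ᶜ : Finset _),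
      a i * ((if i = Fin.last (m + 1) then (if j = Fin.last (m + 1) then (r : ℤ) else 1)
        else if j = i then 1 else 0 : ℤ) : ℝ) = if j = i then a i else 0 := fun i hi => by
    rw [if_neg (by simpa using hi)]; split_ifs <;> simp
  rw [Finset.sum_congr rfl hrest, Finset.sum_ite_eq]
  by_cases hj : j = Fin.last (m + 1) <;> simp [hj, mul_comm, add_comm]

lemma linearIndependent_exGens (hr : r ≠ 0) :
    LinearIndependent ℝ fun i => castZ (exGens (m + 2) r i) := by
  have hr' : (r : ℝ) ≠ 0 := Nat.cast_ne_zero.mpr hr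
  refine Fintype.linearIndependent_iff.mpr fun a ha => ?_
  have hcoord := fun j => congrFun ha j
  simp only [sum_smul_exGens_apply, Pi.zero_apply] at hcoord
  have hlast : a (Fin.last (m + 1)) = 0 := by
    simpa [hr'] using hcoord (Fin.last (m + 1))
  intro j
  by_cases hj : j = Fin.last (m + 1)
  · rw [hj, hlast]
  · simpa [hj, hlast] using hcoord j

/-- The coordinates of `x` in the basis `e₁, …, e_{n-1}, a`. -/
noncomputable def exCoeff (m r : ℕ) (x : Fin (m + 2) → ℝ) : Fin (m + 2) → ℝ := fun i =>
  if i = Fin.last (m + 1) then x (Fin.last (m + 1)) / r else x i - x (Fin.last (m + 1)) / r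

lemma eq_sum_exCoeff_smul (hr : r ≠ 0) (x : Fin (m + 2) → ℝ) :
    x = ∑ i, exCoeff m r x i • castZ (exGens (m + 2) r i) := by
  have hr' : (r : ℝ) ≠ 0 := Nat.cast_ne_zero.mpr hr
  funext j
  rw [sum_smul_exGens_apply]
  by_cases hj : j = Fin.last (m + 1)
  · simp [exCoeff, hj, mul_div_cancel₀ _ hr']
  · simp [exCoeff, hj]

lemma latticeInCone_exGens_iff (hr : r ≠ 0) (u : Fin (m + 2) → ℤ) :
    latticeInCone (exGens (m + 2) r) u ↔
      0 ≤ u (Fin.last (m + 1)) ∧ ∀ j ≠ Fin.last (m + 1), u (Fin.last (m + 1)) ≤ r * u j := by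
  have hr' : (0 : ℝ) < r := Nat.cast_pos.mpr (Nat.pos_of_ne_zero hr)
  rw [latticeInCone, inCone_iff_of_linearIndependent (linearIndependent_exGens hr)
    (eq_sum_exCoeff_smul hr _)]
  refine ⟨fun h => ⟨?_, fun j hj => ?_⟩, fun ⟨hlast, hj⟩ i => ?_⟩
  · have h0 := h (Fin.last (m + 1))
    simp only [exCoeff, castZ, if_pos] at h0
    simpa using (le_div_iff₀ hr').mp h0
  · have := h j
    simp only [exCoeff, if_neg hj, castZ, sub_nonneg, div_le_iff₀ hr'] at this
    exact_mod_cast (by linarith : (u (Fin.last (m + 1)) : ℝ) ≤ r * u j)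
  · by_cases hi : i = Fin.last (m + 1)
    · simp only [exCoeff, if_pos hi, castZ]
      positivity
    · simp only [exCoeff, if_neg hi, castZ, sub_nonneg, div_le_iff₀ hr']
      exact_mod_cast (by linarith [hj i hi] : u (Fin.last (m + 1)) ≤ u i * r)

section Lattice

variable {p q : Fin (m + 2) → ℤ}

lemma latticeInCone_exGens_exA (hr : r ≠ 0) {i : ℕ} (hir : i ≤ r) :
    latticeInCone (exGens (m + 2) r) (exA (m + 2) i) := by
  refine (latticeInCone_exGens_iff hr _).mpr ⟨by simp [exA_apply], fun j hj => ?_⟩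
  simp [exA_apply, hj, hir]

lemma exA_ne_zero (i : ℕ) : exA (m + 2) i ≠ 0 := fun h => by
  simpa [exA_apply, Fin.ext_iff] using congrFun h 0

lemma nonneg_of_latticeInCone_exGens (hr : r ≠ 0) (hp : latticeInCone (exGens (m + 2) r) p)
    (j : Fin (m + 2)) : 0 ≤ p j := by
  obtain ⟨hlast, hle⟩ := (latticeInCone_exGens_iff hr p).mp hp
  by_cases hj : j = Fin.last (m + 1)
  · rwa [hj]
  · exact (mul_nonneg_iff_of_pos_left (by omega : (0 : ℤ) < r)).mp (hlast.trans (hle j hj))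

lemma eq_zero_of_add_eq_zero_of_latticeInCone_exGens (hr : r ≠ 0)
    (hp : latticeInCone (exGens (m + 2) r) p) (hq : latticeInCone (exGens (m + 2) r) q)
    (h : p + q = 0) : p = 0 := funext fun j => by
  have := congrFun h j
  have := nonneg_of_latticeInCone_exGens hr hp j
  have := nonneg_of_latticeInCone_exGens hr hq j
  simp only [Pi.add_apply, Pi.zero_apply] at *
  omega

/-- Once `p` has positive last coordinate, it uses up every other coordinate of `aᵢ`, and a
lattice point of `Q` vanishing off the last coordinate is zero. -/
lemma eq_zero_of_add_eq_exA (hr : r ≠ 0) {i : ℕ}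
    (hp : latticeInCone (exGens (m + 2) r) p) (hq : latticeInCone (exGens (m + 2) r) q)
    (h : p + q = exA (m + 2) i) (hpL : 1 ≤ p (Fin.last (m + 1))) : q = 0 := by
  have hq_off : ∀ j ≠ Fin.last (m + 1), q j = 0 := fun j hj => by
    have hsum := congrFun h j
    simp only [Pi.add_apply, exA_apply, if_neg hj] at hsum
    have hpj : 0 < r * p j := hpL.trans_lt' zero_lt_one |>.trans_le
      ((latticeInCone_exGens_iff hr p).mp hp |>.2 j hj)
    have := nonneg_of_latticeInCone_exGens hr hq j
    have : 0 < p j := pos_of_mul_pos_right hpj (by omega)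
    omega
  have h0 : (0 : Fin (m + 2)) ≠ Fin.last (m + 1) := by simp [Fin.ext_iff]
  funext j
  by_cases hj : j = Fin.last (m + 1)
  · obtain ⟨hlast, hle⟩ := (latticeInCone_exGens_iff hr q).mp hq
    have := hle 0 h0
    rw [hq_off 0 h0, mul_zero] at this
    rw [hj, Pi.zero_apply]
    exact le_antisymm this hlast
  · exact hq_off j hj

lemma eq_zero_or_eq_zero_of_add_eq_exA (hr : r ≠ 0) {i : ℕ} (hi : 1 ≤ i)
    (hp : latticeInCone (exGens (m + 2) r) p) (hq : latticeInCone (exGens (m + 2) r) q)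
    (h : p + q = exA (m + 2) i) : p = 0 ∨ q = 0 := by
  have hlast := congrFun h (Fin.last (m + 1))
  simp only [Pi.add_apply, exA_apply] at hlast
  by_cases hpL : 1 ≤ p (Fin.last (m + 1))
  · exact .inr (eq_zero_of_add_eq_exA hr hp hq h hpL)
  · exact .inl (eq_zero_of_add_eq_exA hr hq hp (add_comm p q ▸ h) (by omega))

end Lattice

lemma kU_exGens_zero (hr : r ≠ 0) : kU (exGens (m + 2) r) 0 = 0 := by
  refine kU_eq_of_inPowM (inPowM_zero_of_latticeInCone latticeInCone_zero) ?_
  rintro ⟨v, hv, hrest⟩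
  refine (hv 0).2 (eq_zero_of_add_eq_zero_of_latticeInCone_exGens hr (hv 0).1 hrest ?_)
  simp

lemma kU_exGens_exA (hr : r ≠ 0) {i : ℕ} (hi : 1 ≤ i) (hir : i ≤ r) :
    kU (exGens (m + 2) r) (exA (m + 2) i) = 1 := by
  refine kU_eq_of_inPowM (inPowM_one_of_latticeInCone (latticeInCone_exGens_exA hr hir)
    (exA_ne_zero i)) ?_
  rintro ⟨v, hv, hrest⟩
  have hsplit : v 0 + (v 1 + (exA (m + 2) i - ∑ j, v j)) = exA (m + 2) i := by
    rw [Fin.sum_univ_two]; abel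
  rcases eq_zero_or_eq_zero_of_add_eq_exA hr hi (hv 0).1 ((hv 1).1.add hrest) hsplit with h | h
  · exact (hv 0).2 h
  · exact (hv 1).2 (eq_zero_of_add_eq_zero_of_latticeInCone_exGens hr (hv 1).1 hrest h)

lemma exCoeff_exA (i : ℕ) (j : Fin (m + 2)) :
    exCoeff m r (castZ (exA (m + 2) i)) j =
      if j = Fin.last (m + 1) then (i : ℝ) / r else 1 - (i : ℝ) / r := by
  by_cases hj : j = Fin.last (m + 1) <;> simp [exCoeff, castZ, exA_apply, hj]

lemma sum_exCoeff_exA (i : ℕ) :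
    ∑ j, exCoeff m r (castZ (exA (m + 2) i)) j = (m + 1) * (1 - (i : ℝ) / r) + i / r := by
  rw [Fin.sum_univ_castSucc]
  simp [exCoeff_exA, Fin.castSucc_ne_last]
  ring

lemma maxWeight_exGens_exA (hr : r ≠ 0) {i : ℕ} (hir : i ≤ r) :
    maxWeight (fun j => castZ (exGens (m + 2) r j)) (castZ (exA (m + 2) i)) =
      (m + 1) * (1 - (i : ℝ) / r) + i / r := by
  have hr' : (0 : ℝ) < r := Nat.cast_pos.mpr (Nat.pos_of_ne_zero hr)
  have hir' : (i : ℝ) / r ≤ 1 := (div_le_one hr').mpr (by exact_mod_cast hir)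
  rw [← sum_exCoeff_exA]
  refine maxWeight_eq_sum (linearIndependent_exGens hr) (fun j => ?_) (eq_sum_exCoeff_smul hr _)
  rw [exCoeff_exA]
  split_ifs
  · positivity
  · linarith

/-- Off the last coordinate a box point equals `⌈u_n / r⌉`, the only integer in
`[u_n / r, u_n / r + 1)`, and `0 ≤ u_n < r`. -/
lemma inBox_exGens_iff (hr : r ≠ 0) (u : Fin (m + 2) → ℤ) :
    inBox (exGens (m + 2) r) u ↔
      u = 0 ∨ ∃ i : ℕ, 1 ≤ i ∧ i ≤ r - 1 ∧ u = exA (m + 2) i := by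
  have hr' : (0 : ℝ) < r := Nat.cast_pos.mpr (Nat.pos_of_ne_zero hr)
  rw [inBox_iff_of_linearIndependent (linearIndependent_exGens hr) (eq_sum_exCoeff_smul hr _)]
  constructor
  · intro h
    set t : ℝ := (u (Fin.last (m + 1)) : ℝ) / r with ht_def
    obtain ⟨ht0, ht1⟩ : 0 ≤ t ∧ t < 1 := by simpa [exCoeff, castZ] using h (Fin.last (m + 1))
    have hoff : ∀ j ≠ Fin.last (m + 1), u j = ⌈t⌉ := fun j hj => by
      obtain ⟨hj0, hj1⟩ := h j
      simp only [exCoeff, castZ, if_neg hj] at hj0 hj1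
      exact (Int.ceil_eq_iff.mpr ⟨by linarith, by linarith⟩).symm
    have hL0 : 0 ≤ u (Fin.last (m + 1)) := by simpa using (le_div_iff₀ hr').mp ht0
    have hLr : u (Fin.last (m + 1)) < r := by exact_mod_cast (div_lt_one hr').mp ht1
    rcases hL0.eq_or_lt with hL | hL
    · refine .inl (funext fun j => ?_)
      by_cases hj : j = Fin.last (m + 1)
      · rw [hj, ← hL, Pi.zero_apply]
      · rw [hoff j hj, ht_def, ← hL]
        simp
    · have hceil : ⌈t⌉ = 1 := Int.ceil_eq_iff.mpr ⟨by simpa using div_pos (by exact_mod_cast hL) hr',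
        by simpa using ht1.le⟩
      refine .inr ⟨(u (Fin.last (m + 1))).toNat, by omega, by omega, funext fun j => ?_⟩
      by_cases hj : j = Fin.last (m + 1)
      · simp [exA_apply, hj, hL0]
      · simp [exA_apply, hj, hoff j hj, hceil]
  · rintro (rfl | ⟨i, hi, hir, rfl⟩)
    · simp [exCoeff, castZ]
    · have hi0 : (0 : ℝ) < i / r := div_pos (by exact_mod_cast hi) hr'
      have hi1 : (i : ℝ) / r < 1 := (div_lt_one hr').mpr (by exact_mod_cast (by omega : i < r))
      intro j
      rw [exCoeff_exA]
      split_ifs <;> constructor <;> linarith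

lemma gammaQ_exGens (hr : r ≠ 0) : gammaQ (exGens (m + 2) r) = m - m / r := by
  have hr' : (1 : ℝ) ≤ r := Nat.one_le_cast.mpr (Nat.one_le_iff_ne_zero.mpr hr)
  have hm : (0 : ℝ) ≤ m := m.cast_nonneg
  have hval : ∀ i : ℕ, i ≤ r →
      maxWeight (fun j => castZ (exGens (m + 2) r j)) (castZ (exA (m + 2) i)) - 1 =
        m - m * (i / r) := fun i hir => by
    rw [maxWeight_exGens_exA hr hir]; ring
  refine IsGreatest.csSup_eq ⟨?_, ?_⟩
  · rcases eq_or_ne r 1 with rfl | hr1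
    · exact ⟨0, (inBox_exGens_iff hr 0).mpr (.inl rfl), by
        simp [maxWeight_zero (linearIndependent_exGens hr), kU_exGens_zero hr]⟩
    · refine ⟨exA (m + 2) 1, (inBox_exGens_iff hr _).mpr (.inr ⟨1, le_rfl, by omega, rfl⟩), ?_⟩
      rw [kU_exGens_exA hr le_rfl (by omega), Nat.cast_one, hval 1 (by omega)]
      ring
  · rintro x ⟨u, hu, rfl⟩
    rcases (inBox_exGens_iff hr u).mp hu with rfl | ⟨i, hi, hir, rfl⟩
    · rw [castZ_zero, maxWeight_zero (linearIndependent_exGens hr), kU_exGens_zero hr,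
        Nat.cast_zero, sub_zero]
      linarith [div_le_self hm hr']
    · rw [kU_exGens_exA hr hi (by omega), Nat.cast_one, hval i (by omega)]
      have : (1 : ℝ) / r ≤ i / r := by gcongr; exact_mod_cast hi
      rw [div_eq_mul_one_div (m : ℝ)]
      linarith [mul_le_mul_of_nonneg_left this hm]

end Example

/-- In the cone `Q = Cone(e₁,...,e_{n−1}, a)` with
`a = e₁ + ⋯ + e_{n−1} + r·eₙ`, `r > n − 2`, the lattice points of the fundamental box
are exactly `0, a₁, ..., a_{r−1}`, and `Γ_Q = n − 2 − (n−2)/r`. -/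
theorem example_box_and_gamma (n r : ℕ) (hn : 2 ≤ n) (hr : n - 2 < r) :
    (∀ u : Fin n → ℤ, inBox (exGens n r) u ↔
      (u = 0 ∨ ∃ i : ℕ, 1 ≤ i ∧ i ≤ r - 1 ∧ u = exA n i)) ∧
    gammaQ (exGens n r) = (n : ℝ) - 2 - ((n : ℝ) - 2) / (r : ℝ) := by
  obtain ⟨m, rfl⟩ : ∃ m, n = m + 2 := ⟨n - 2, by omega⟩
  have hr0 : r ≠ 0 := by omega
  refine ⟨inBox_exGens_iff hr0, ?_⟩
  rw [gammaQ_exGens hr0]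
  push_cast
  ring
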